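/- arXiv:2105.01413 — 5 statements merged into one kernel-verified Lean document; each statement's English description precedes it below -/
import Mathlib

section
/- Let G be a digraph with at least two vertices and let H be its underlying undirected graph. Then mimw(H) ≤ bimimw(G) and lmimw(H) ≤ lbimimw(G). -/
open scoped Classical

/-- An induced matching in a digraph with edge relation `D`: a finite set of edges of `D`,
no two of which share an endpoint, such that no edge of `D` joins an endpoint of one
matching edge to an endpoint of a different matching edge. -/
def IsIndMatching {V : Type} (D : V → V → Prop) (M : Finset (V × V)) : Prop :=
  (∀ e ∈ M, D e.1 e.2) ∧
    ∀ e ∈ M, ∀ f ∈ M, e ≠ f →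
      ∀ x, (x = e.1 ∨ x = e.2) → ∀ y, (y = f.1 ∨ y = f.2) → x ≠ y ∧ ¬D x y

/-- `ν(D)`: the maximum size of an induced matching in the digraph `D`. -/
noncomputable def nu {V : Type} (D : V → V → Prop) : ℕ :=
  sSup {n | ∃ M : Finset (V × V), IsIndMatching D M ∧ M.card = n}

/-- The bipartite digraph `G[A→B]`, whose edges are the edges of `E` from `A` to `B`. -/
def cutRel {V : Type} (E : V → V → Prop) (A B : Set V) : V → V → Prop :=
  fun x y => x ∈ A ∧ y ∈ B ∧ E x y

/-- `bimim_G(A) = ν(G[A→Ā]) + ν(G[Ā→A])`. -/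
noncomputable def bimimCut {V : Type} (E : V → V → Prop) (A : Set V) : ℕ :=
  nu (cutRel E A Aᶜ) + nu (cutRel E Aᶜ A)

/-- For an undirected graph `G`, `mim_G(A) = ν(G[A, Ā])`. -/
noncomputable def mimCut {V : Type} (G : SimpleGraph V) (A : Set V) : ℕ :=
  nu (cutRel G.Adj A Aᶜ)
/-- A caterpillar: a tree containing a path such that every vertex outside the path
has a neighbor on the path. -/
def IsCaterpillar {L : Type} (T : SimpleGraph L) : Prop :=
  ∃ (u v : L) (p : T.Walk u v), p.IsPath ∧
    ∀ w : L, w ∉ p.support → ∃ x ∈ p.support, T.Adj w x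

/-- A branch decomposition of a (di)graph on vertex set `V`: a subcubic tree (at least
two vertices, every internal vertex of degree 3) together with a bijection from `V`
to the set of leaves of the tree. -/
structure BranchDecomp (V : Type) where
  L : Type
  finL : Finite L
  T : SimpleGraph L
  isTree : T.IsTree
  two_le : 2 ≤ Nat.card L
  subcubic : ∀ t : L, (T.neighborSet t).ncard = 1 ∨ (T.neighborSet t).ncard = 3
  toLeaf : V → L
  inj : Function.Injective toLeaf
  mem_leaf : ∀ v : V, (T.neighborSet (toLeaf v)).ncard = 1
  surj : ∀ t : L, (T.neighborSet t).ncard = 1 → ∃ v, toLeaf v = t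

/-- The side `A_e` of the cut induced by the tree edge `{t₁, t₂}`: the set of vertices
mapped to leaves in the component of `T - e` containing `t₁`. -/
def BranchDecomp.side {V : Type} (bd : BranchDecomp V) (t₁ t₂ : bd.L) : Set V :=
  {v | (bd.T.deleteEdges {s(t₁, t₂)}).Reachable t₁ (bd.toLeaf v)}

/-- The bi-mim-width of a branch decomposition with respect to a digraph. -/
noncomputable def BranchDecomp.width {V : Type} (bd : BranchDecomp V)
    (E : V → V → Prop) : ℕ :=
  sSup {n | ∃ t₁ t₂, bd.T.Adj t₁ t₂ ∧ n = bimimCut E (bd.side t₁ t₂)}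

/-- The mim-width of a branch decomposition with respect to an undirected graph. -/
noncomputable def BranchDecomp.uwidth {V : Type} (bd : BranchDecomp V)
    (G : SimpleGraph V) : ℕ :=
  sSup {n | ∃ t₁ t₂, bd.T.Adj t₁ t₂ ∧ n = mimCut G (bd.side t₁ t₂)}

/-- The bi-mim-width of a digraph. -/
noncomputable def bimimw {V : Type} (E : V → V → Prop) : ℕ :=
  sInf {n | ∃ bd : BranchDecomp V, bd.width E = n}

/-- The linear bi-mim-width of a digraph. -/
noncomputable def lbimimw {V : Type} (E : V → V → Prop) : ℕ :=
  sInf {n | ∃ bd : BranchDecomp V, IsCaterpillar bd.T ∧ bd.width E = n}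

/-- The mim-width of an undirected graph. -/
noncomputable def mimw {V : Type} (G : SimpleGraph V) : ℕ :=
  sInf {n | ∃ bd : BranchDecomp V, bd.uwidth G = n}

/-- The linear mim-width of an undirected graph. -/
noncomputable def lmimw {V : Type} (G : SimpleGraph V) : ℕ :=
  sInf {n | ∃ bd : BranchDecomp V, IsCaterpillar bd.T ∧ bd.uwidth G = n}

namespace IsIndMatching

variable {V : Type} {D D' : V → V → Prop} {M M' : Finset (V × V)}

theorem card_le_nu [Finite V] (hM : IsIndMatching D M) : M.card ≤ nu D := by
  have := Fintype.ofFinite V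
  refine le_csSup ⟨Fintype.card (V × V), ?_⟩ ⟨M, hM, rfl⟩
  rintro _ ⟨N, -, rfl⟩
  exact N.card_le_univ

theorem of_subset (hM : IsIndMatching D M) (hsub : M' ⊆ M) (hedge : ∀ e ∈ M', D' e.1 e.2)
    (hle : ∀ x y, x ≠ y → D' x y → D x y) : IsIndMatching D' M' := by
  refine ⟨hedge, fun e he f hf hef x hx y hy => ?_⟩
  obtain ⟨hxy, hD⟩ := hM.2 e (hsub he) f (hsub hf) hef x hx y hy
  exact ⟨hxy, fun hD' => hD (hle x y hxy hD')⟩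

theorem image_swap (hM : IsIndMatching D M) :
    IsIndMatching (fun x y => D y x) (M.image Prod.swap) := by
  refine ⟨?_, ?_⟩
  · simp only [Finset.mem_image]
    rintro _ ⟨e, he, rfl⟩
    exact hM.1 e he
  · simp only [Finset.mem_image]
    rintro _ ⟨e, he, rfl⟩ _ ⟨f, hf, rfl⟩ hef x hx y hy
    have hef : e ≠ f := fun h => hef (h ▸ rfl)
    have hx : x = e.1 ∨ x = e.2 := hx.symm
    have hy : y = f.1 ∨ y = f.2 := hy.symm
    exact ⟨(hM.2 e he f hf hef x hx y hy).1, (hM.2 f hf e he hef.symm y hy x hx).2⟩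

end IsIndMatching

theorem nu_le_of_forall_card_le {V : Type} {D : V → V → Prop} {k : ℕ}
    (h : ∀ M, IsIndMatching D M → M.card ≤ k) : nu D ≤ k :=
  csSup_le' fun _ ⟨M, hM, hcard⟩ => hcard ▸ h M hM

-- An induced matching of `H[A, Ā]` splits into its edges oriented `A → Ā` in `G`, and the
-- reversals of the others, which are oriented `Ā → A`.
theorem mimCut_fromRel_le_bimimCut {V : Type} [Finite V] (E : V → V → Prop) (A : Set V) :
    mimCut (SimpleGraph.fromRel E) A ≤ bimimCut E A := by
  refine nu_le_of_forall_card_le fun M hM => ?_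
  set Mfwd := M.filter fun e => E e.1 e.2
  set Mbwd := (M.filter fun e => ¬E e.1 e.2).image Prod.swap
  have hfwd : IsIndMatching (cutRel E A Aᶜ) Mfwd := by
    refine hM.of_subset (Finset.filter_subset _ _) ?_ ?_
    · intro e he
      rw [Finset.mem_filter] at he
      obtain ⟨hA, hAc, -⟩ := hM.1 e he.1
      exact ⟨hA, hAc, he.2⟩
    · rintro x y hxy ⟨hx, hy, hE⟩
      exact ⟨hx, hy, (SimpleGraph.fromRel_adj E x y).2 ⟨hxy, Or.inl hE⟩⟩
  have hbwd : IsIndMatching (cutRel E Aᶜ A) Mbwd := by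
    refine hM.image_swap.of_subset (Finset.image_subset_image (Finset.filter_subset _ _)) ?_ ?_
    · simp only [Mbwd, Finset.mem_image, Finset.mem_filter]
      rintro _ ⟨e, ⟨he, hnE⟩, rfl⟩
      obtain ⟨hA, hAc, hadj⟩ := hM.1 e he
      exact ⟨hAc, hA, ((SimpleGraph.fromRel_adj E _ _).1 hadj).2.resolve_left hnE⟩
    · rintro x y hxy ⟨hx, hy, hE⟩
      exact ⟨hy, hx, (SimpleGraph.fromRel_adj E y x).2 ⟨hxy.symm, Or.inr hE⟩⟩
  calc M.card = Mfwd.card + Mbwd.card := by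
        rw [Finset.card_image_of_injective _ Prod.swap_injective,
          Finset.card_filter_add_card_filter_not]
    _ ≤ bimimCut E A := add_le_add hfwd.card_le_nu hbwd.card_le_nu

theorem BranchDecomp.uwidth_fromRel_le_width {V : Type} (bd : BranchDecomp V)
    (E : V → V → Prop) : bd.uwidth (SimpleGraph.fromRel E) ≤ bd.width E := by
  have := bd.finL
  have := Finite.of_injective bd.toLeaf bd.inj
  have hbdd : BddAbove {n | ∃ t₁ t₂, bd.T.Adj t₁ t₂ ∧ n = bimimCut E (bd.side t₁ t₂)} := by
    refine (Set.finite_range fun t : bd.L × bd.L => bimimCut E (bd.side t.1 t.2)).subset ?_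
      |>.bddAbove
    rintro _ ⟨t₁, t₂, -, rfl⟩
    exact ⟨(t₁, t₂), rfl⟩
  refine csSup_le' ?_
  rintro _ ⟨t₁, t₂, hadj, rfl⟩
  exact (mimCut_fromRel_le_bimimCut E _).trans (le_csSup hbdd ⟨t₁, t₂, hadj, rfl⟩)

theorem Nat.sInf_image_le_sInf_image {β : Type*} {s : Set β} {f g : β → ℕ}
    (h : ∀ b ∈ s, f b ≤ g b) : sInf (f '' s) ≤ sInf (g '' s) := by
  rcases s.eq_empty_or_nonempty with rfl | hs
  · simp
  obtain ⟨b, hb, hgb⟩ := Nat.sInf_mem (hs.image g)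
  rw [← hgb]
  exact (Nat.sInf_le (Set.mem_image_of_mem f hb)).trans (h b hb)

theorem stmt_2_general {V : Type} (E : V → V → Prop) :
    mimw (SimpleGraph.fromRel E) ≤ bimimw E ∧
      lmimw (SimpleGraph.fromRel E) ≤ lbimimw E :=
  -- `mimw` and `bimimw` are infima of `Set.range`s, i.e. `⨅ bd, _` by definition.
  ⟨ciInf_mono (OrderBot.bddBelow _) fun bd => bd.uwidth_fromRel_le_width E,
    Nat.sInf_image_le_sInf_image fun bd _ => bd.uwidth_fromRel_le_width E⟩

theorem stmt_2 {V : Type} [Fintype V] (E : V → V → Prop) (h2 : 2 ≤ Nat.card V) :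
    mimw (SimpleGraph.fromRel E) ≤ bimimw E ∧
      lmimw (SimpleGraph.fromRel E) ≤ lbimimw E :=
  stmt_2_general E
end

section
/- Let G be a digraph, let r be a positive integer, and let (A, B) be a partition of V(G). Then ν(G^r[A→B]) ≤ rank₂(M_G[A→B]), where rank₂ denotes rank over the two-element field GF(2). -/
open scoped Classical

/-- The `r`-th power of a digraph: there is an edge `(x, y)` whenever there is a
directed path of length at least 1 and at most `r` from `x` to `y`. -/
def dipower {V : Type} (E : V → V → Prop) (r : ℕ) : V → V → Prop :=
  fun x y => ∃ (k : ℕ) (p : Fin (k + 1) → V), 1 ≤ k ∧ k ≤ r ∧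
    Function.Injective p ∧ (∀ i : Fin k, E (p i.castSucc) (p i.succ)) ∧
    p 0 = x ∧ p (Fin.last k) = y
/-- The matrix `M_G[A→B]` over GF(2): rows indexed by `B`, columns indexed by `A`,
with entry `(b, a)` equal to 1 iff `(a, b)` is an edge. -/
noncomputable def cutMatrix {V : Type} (E : V → V → Prop) (A B : Set V) :
    Matrix B A (ZMod 2) :=
  Matrix.of fun (b : B) (a : A) => if E a.1 b.1 then 1 else 0

/-!
For each edge `(a, b)` of an induced matching of `G^r[A→B]` fix a shortest walk
`a = p₀, …, p_L = b` in `G` (so `L ≤ r`), and let `p_t` be its first vertex in `B`. The sum of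
the columns of `M_G[A→B]` indexed by `p₀, …, p_{t-1}` has a `1` in row `p_t`, since on a shortest
walk only `p_{t-1}` sends an edge to `p_t`. It vanishes in row `p'_{t'}` of every other matching
edge `(a', b')` whose tail `L' - t'` is at most `L - t`: an edge `p_s → p'_{t'}` would give a walk
`a → p_s → p'_{t'} → b'` of length at most `L ≤ r`, i.e. an edge `a → b'` of `G^r` between two
matching edges. Ordering the matching edges by `L - t` makes these vectors triangular, hence
linearly independent, and they all lie in the column space.
-/

open Matrix

namespace Relation

variable {V : Type*} {E : V → V → Prop}

def IsWalk (E : V → V → Prop) (p : ℕ → V) (n : ℕ) : Prop :=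
  ∀ i < n, E (p i) (p (i + 1))

def ReachIn (E : V → V → Prop) (n : ℕ) (x y : V) : Prop :=
  ∃ p, IsWalk E p n ∧ p 0 = x ∧ p n = y

def IsShortestWalk (E : V → V → Prop) (p : ℕ → V) (n : ℕ) : Prop :=
  IsWalk E p n ∧ ∀ m < n, ¬ReachIn E m (p 0) (p n)

lemma reachIn_zero (x : V) : ReachIn E 0 x x :=
  ⟨fun _ => x, fun _ h => absurd h (Nat.not_lt_zero _), rfl, rfl⟩

lemma reachIn_of_rel {x y : V} (h : E x y) : ReachIn E 1 x y :=
  ⟨fun i => if i = 0 then x else y, by simp [IsWalk, h], rfl, rfl⟩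

lemma ReachIn.trans {m n : ℕ} {x y z : V} (hxy : ReachIn E m x y) (hyz : ReachIn E n y z) :
    ReachIn E (m + n) x z := by
  obtain ⟨p, hp, rfl, rfl⟩ := hxy
  obtain ⟨q, hq, hq0, rfl⟩ := hyz
  refine ⟨fun i => if i ≤ m then p i else q (i - m), fun i hi => ?_, by simp, ?_⟩
  · rcases lt_trichotomy i m with h | rfl | h
    · simpa [h.le, Nat.succ_le_of_lt h] using hp i h
    · simpa [hq0] using hq 0 (by omega)
    · simpa [show ¬i ≤ m by omega, show ¬i + 1 ≤ m by omega,
        show i + 1 - m = i - m + 1 by omega] using hq (i - m) (by omega)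
  · rcases Nat.eq_zero_or_pos n with rfl | hn
    · simp [hq0]
    · simp [show ¬m + n ≤ m by omega]

lemma IsWalk.reachIn {p : ℕ → V} {n s t : ℕ} (hp : IsWalk E p n) (hst : s ≤ t) (ht : t ≤ n) :
    ReachIn E (t - s) (p s) (p t) := by
  refine ⟨fun i => p (s + i), fun i hi => ?_, rfl, by simp only; congr 1; omega⟩
  simpa [Nat.add_assoc] using hp (s + i) (by omega)

lemma IsWalk.reachIn_splice {p q : ℕ → V} {m n s t l : ℕ} (hp : IsWalk E p m)
    (hq : IsWalk E q n) (hs : s ≤ m) (ht : t ≤ n) (h : ReachIn E l (p s) (q t)) :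
    ReachIn E (s + l + (n - t)) (p 0) (q n) := by
  simpa using ((hp.reachIn (Nat.zero_le s) hs).trans h).trans (hq.reachIn ht le_rfl)

lemma ReachIn.exists_isShortestWalk {n : ℕ} {x y : V} (h : ReachIn E n x y) :
    ∃ p m, m ≤ n ∧ IsShortestWalk E p m ∧ p 0 = x ∧ p m = y := by
  classical
  have hex : ∃ m, ReachIn E m x y := ⟨n, h⟩
  obtain ⟨p, hp, hp0, hpm⟩ := Nat.find_spec hex
  refine ⟨p, Nat.find hex, Nat.find_min' hex h, ⟨hp, fun m hm => ?_⟩, hp0, hpm⟩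
  rw [hp0, hpm]
  exact Nat.find_min hex hm

namespace IsShortestWalk

variable {p : ℕ → V} {n : ℕ} (hp : IsShortestWalk E p n)
include hp

lemma sub_le_of_reachIn {s t l : ℕ} (hs : s ≤ n) (ht : t ≤ n)
    (h : ReachIn E l (p s) (p t)) : t - s ≤ l := by
  by_contra hlt
  exact hp.2 _ (by omega) (hp.1.reachIn_splice hp.1 hs ht h)

lemma injOn : Set.InjOn p (Set.Iic n) := fun s hs t ht hst => by
  have h₁ := hp.sub_le_of_reachIn hs ht (l := 0) (by rw [hst]; exact reachIn_zero _)
  have h₂ := hp.sub_le_of_reachIn ht hs (l := 0) (by rw [hst]; exact reachIn_zero _)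
  omega

lemma not_rel {s t : ℕ} (hst : s + 1 < t) (ht : t ≤ n) : ¬E (p s) (p t) := fun h => by
  have := hp.sub_le_of_reachIn (by omega) ht (reachIn_of_rel h)
  omega

lemma sum_range_ite_rel {R : Type*} [AddCommMonoidWithOne R] {t : ℕ} (ht0 : 0 < t)
    (ht : t ≤ n) : ∑ s ∈ Finset.range t, (if E (p s) (p t) then (1 : R) else 0) = 1 := by
  rw [Finset.sum_eq_single_of_mem (t - 1) (Finset.mem_range.mpr (Nat.sub_lt ht0 one_pos))]
  · have hE := hp.1 (t - 1) (by omega)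
    rw [Nat.sub_add_cancel ht0] at hE
    exact if_pos hE
  · intro s hs hne
    exact if_neg (hp.not_rel (by rw [Finset.mem_range] at hs; omega) ht)

end IsShortestWalk

end Relation

lemma exists_first_mem {V : Type*} {B : Set V} {p : ℕ → V} {n : ℕ} (h0 : p 0 ∉ B)
    (hn : p n ∈ B) : ∃ t, 0 < t ∧ t ≤ n ∧ p t ∈ B ∧ ∀ s < t, p s ∉ B := by
  classical
  have hex : ∃ t, p t ∈ B := ⟨n, hn⟩
  refine ⟨Nat.find hex, Nat.pos_of_ne_zero fun h => h0 ?_, Nat.find_min' hex hn,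
    Nat.find_spec hex, fun s => Nat.find_min hex⟩
  simpa [h] using Nat.find_spec hex

section dipower

open Relation

variable {V : Type} {E : V → V → Prop} {r : ℕ} {x y : V}

lemma exists_reachIn_of_dipower (h : dipower E r x y) : ∃ n ≤ r, ReachIn E n x y := by
  obtain ⟨k, p, -, hkr, -, hp, rfl, rfl⟩ := h
  refine ⟨k, hkr, fun i => p (Fin.clamp i k), fun i hi => ?_, ?_, ?_⟩
  · convert hp ⟨i, hi⟩ using 3 <;> ext <;> simp [Fin.clamp] <;> omega
  · congr
  · dsimp only; congr 1; ext; simp [Fin.clamp]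

lemma dipower_of_reachIn {n : ℕ} (hxy : x ≠ y) (h : ReachIn E n x y) (hn : n ≤ r) :
    dipower E r x y := by
  obtain ⟨p, m, hmn, hp, rfl, rfl⟩ := h.exists_isShortestWalk
  have hm : 1 ≤ m := Nat.one_le_iff_ne_zero.mpr (by rintro rfl; exact hxy rfl)
  refine ⟨m, fun i => p i, hm, hmn.trans hn, fun i j hij => ?_, fun i => hp.1 i i.2, rfl, rfl⟩
  exact Fin.ext (hp.injOn (Nat.lt_succ_iff.mp i.2) (Nat.lt_succ_iff.mp j.2) hij)

end dipower

theorem linearIndependent_of_triangular {ι κ K β : Type*} [Fintype ι] [Ring K]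
    [NoZeroDivisors K] [LinearOrder β] (v : ι → κ → K) (σ : ι → κ) (φ : ι → β)
    (hdiag : ∀ i, v i (σ i) ≠ 0) (hoff : ∀ i j, i ≠ j → φ j ≤ φ i → v i (σ j) = 0) :
    LinearIndependent K v := by
  classical
  rw [Fintype.linearIndependent_iff]
  intro g hg
  by_contra! ⟨i₀, hi₀⟩
  obtain ⟨j, hj, hjmin⟩ := Finset.exists_min_image {i | g i ≠ 0} φ ⟨i₀, by simpa using hi₀⟩
  have hgj : g j ≠ 0 := by simpa using hj
  have hsum := congrFun hg (σ j)
  simp only [Finset.sum_apply, Pi.smul_apply, smul_eq_mul, Pi.zero_apply] at hsum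
  rw [Finset.sum_eq_single j] at hsum
  · exact mul_ne_zero hgj (hdiag j) hsum
  · intro i _ hij
    by_cases hi : g i = 0
    · rw [hi, zero_mul]
    · rw [hoff i j hij (hjmin i (by simpa using hi)), mul_zero]
  · simp

theorem Matrix.card_le_rank_of_linearIndependent_mulVec {m n ι K : Type*} [Fintype n]
    [Fintype ι] [Field K] (M : Matrix m n K) (x : ι → n → K)
    (h : LinearIndependent K fun i => M *ᵥ x i) : Fintype.card ι ≤ M.rank := by
  rw [← finrank_span_eq_card h, Matrix.rank]
  refine Submodule.finrank_mono (Submodule.span_le.mpr ?_)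
  rintro _ ⟨i, rfl⟩
  exact ⟨x i, rfl⟩

lemma cutMatrix_mulVec_sum_single {V : Type} (E : V → V → Prop) (A B : Set V) [Fintype A]
    {ι : Type*} (S : Finset ι) (q : ι → A) (b : B) :
    (cutMatrix E A B *ᵥ ∑ i ∈ S, Pi.single (q i) 1) b = ∑ i ∈ S, if E (q i) b then 1 else 0 := by
  simp [Matrix.mulVec_sum, Finset.sum_apply, cutMatrix]

open Relation in
theorem IsIndMatching.card_le_rank {V : Type} [Fintype V] {E : V → V → Prop} {r : ℕ}
    {A B : Set V} (hU : A ∪ B = Set.univ) (hI : A ∩ B = ∅) {M : Finset (V × V)}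
    (hM : IsIndMatching (cutRel (dipower E r) A B) M) : M.card ≤ (cutMatrix E A B).rank := by
  have hA : ∀ v ∉ B, v ∈ A := fun v hv => ((hU ▸ Set.mem_univ v : v ∈ A ∪ B)).resolve_right hv
  have hB : ∀ v ∈ A, v ∉ B := fun v ha hb => (hI ▸ ⟨ha, hb⟩ : v ∈ (∅ : Set V))
  have hwalk : ∀ e : M, ∃ p L, L ≤ r ∧ IsShortestWalk E p L ∧ p 0 = e.1.1 ∧ p L = e.1.2 := by
    intro e
    obtain ⟨n, hnr, hn⟩ := exists_reachIn_of_dipower (hM.1 e e.2).2.2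
    obtain ⟨p, L, hLn, hp⟩ := hn.exists_isShortestWalk
    exact ⟨p, L, hLn.trans hnr, hp⟩
  choose p L hLr hp hp0 hpL using hwalk
  have hcross : ∀ e : M, ∃ t, 0 < t ∧ t ≤ L e ∧ p e t ∈ B ∧ ∀ s < t, p e s ∉ B := fun e =>
    exists_first_mem (hp0 e ▸ hB _ (hM.1 e e.2).1) (hpL e ▸ (hM.1 e e.2).2.1)
  choose t ht0 htL htB htA using hcross
  let x : M → A → ZMod 2 := fun e => ∑ s : Fin (t e), Pi.single ⟨p e s, hA _ (htA e s s.2)⟩ 1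
  have hx : ∀ e b, (cutMatrix E A B *ᵥ x e) b =
      ∑ s ∈ Finset.range (t e), if E (p e s) b then 1 else 0 := fun e b => by
    rw [cutMatrix_mulVec_sum_single,
      Fin.sum_univ_eq_sum_range (fun s => if E (p e s) b then 1 else 0)]
  rw [← Fintype.card_coe M]
  refine (cutMatrix E A B).card_le_rank_of_linearIndependent_mulVec x
    (linearIndependent_of_triangular _ (fun e => ⟨p e (t e), htB e⟩) (fun e => L e - t e)
      (fun e => ?_) (fun e f hef hle => ?_))
  · rw [hx, (hp e).sum_range_ite_rel (ht0 e) (htL e)]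
    exact one_ne_zero
  · rw [hx]
    refine Finset.sum_eq_zero fun s hs => if_neg fun hE => ?_
    rw [Finset.mem_range] at hs
    have := htL e
    have := hLr e
    have hreach := (hp e).1.reachIn_splice (hp f).1 (by omega) (htL f) (reachIn_of_rel hE)
    rw [hp0, hpL] at hreach
    obtain ⟨hne, hnot⟩ :=
      hM.2 e e.2 f f.2 (fun h => hef (Subtype.ext h)) _ (Or.inl rfl) _ (Or.inr rfl)
    exact hnot ⟨(hM.1 e e.2).1, (hM.1 f f.2).2.1, dipower_of_reachIn hne hreach (by omega)⟩

theorem stmt_4_general {V : Type} [Fintype V] (E : V → V → Prop) (r : ℕ)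
    (A B : Set V) (hU : A ∪ B = Set.univ) (hI : A ∩ B = ∅) :
    nu (cutRel (dipower E r) A B) ≤ (cutMatrix E A B).rank := by
  refine csSup_le' ?_
  rintro _ ⟨M, hM, rfl⟩
  exact hM.card_le_rank hU hI

theorem stmt_4 {V : Type} [Fintype V] (E : V → V → Prop) (r : ℕ) (hr : 1 ≤ r)
    (A B : Set V) (hU : A ∪ B = Set.univ) (hI : A ∩ B = ∅) :
    nu (cutRel (dipower E r) A B) ≤ (cutMatrix E A B).rank :=
  stmt_4_general E r A B hU hI
end

section
/- Let r and w be positive integers and let G be a digraph. If (T, δ) is a branch decomposition of G of bi-rank-width at most w, then (T, δ), regarded as a branch decomposition of G^r, has bi-mim-width at most w. -/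
open scoped Classical

/-- `bicutrk_G(A) = rank₂(M_G[A→Ā]) + rank₂(M_G[Ā→A])`. -/
noncomputable def bicutrk {V : Type} [Fintype V] (E : V → V → Prop) (A : Set V) : ℕ :=
  (cutMatrix E A Aᶜ).rank + (cutMatrix E Aᶜ A).rank

/-- The bi-rank-width of a branch decomposition with respect to a digraph. -/
noncomputable def birwidth {V : Type} [Fintype V] (bd : BranchDecomp V)
    (E : V → V → Prop) : ℕ :=
  sSup {n | ∃ t₁ t₂, bd.T.Adj t₁ t₂ ∧ n = bicutrk E (bd.side t₁ t₂)}

/-!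
A path of length at most `r` in `G` from `a ∈ A` to `b ∉ A` leaves `A` through a first edge
`(α, β)` of `G[A→Ā]`, reached after `ℓ` steps. For an induced matching `(aᵢ, bᵢ)` of
`G^r[A→Ā]`, an edge `αⱼ → βᵢ` with `i ≠ j` and `ℓⱼ ≤ ℓᵢ` would give a walk `aⱼ ⇝ αⱼ → βᵢ ⇝ bᵢ`
of length at most `r`, i.e. an edge `aⱼ → bᵢ` of `G^r[A→Ā]`. Ordering the matching by `ℓ`,
the submatrix of `M_G[A→Ā]` on the rows `βᵢ` and columns `αⱼ` is therefore unitriangular, so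
its rank is the size of the matching. Hence `bimim_{G^r}(A) ≤ bicutrk_G(A)` for every cut.
-/

namespace Matrix

theorem det_eq_one_of_apply_eq_one_apply {n α R : Type*} [Fintype n] [DecidableEq n]
    [LinearOrder α] [CommRing R] (M : Matrix n n R) (b : n → α)
    (h : ∀ i j, b j ≤ b i → M i j = (1 : Matrix n n R) i j) : M.det = 1 := by
  have hM : M.BlockTriangular b := fun i j hlt => by
    rw [h i j hlt.le, one_apply_ne (ne_of_apply_ne b hlt.ne')]
  rw [hM.det]
  refine Finset.prod_eq_one fun a _ => ?_
  have hblock : M.toSquareBlock b a = 1 := by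
    ext i j
    rw [toSquareBlock_def, of_apply, h i j (i.2.trans j.2.symm).ge]
    simp only [one_apply, Subtype.ext_iff]
  rw [hblock, det_one]

end Matrix

section

variable {V : Type} {E : V → V → Prop}

inductive ReachWithin (E : V → V → Prop) : ℕ → V → V → Prop
  | refl (n : ℕ) (x : V) : ReachWithin E n x x
  | cons {n : ℕ} {x y z : V} : E x y → ReachWithin E n y z → ReachWithin E (n + 1) x z

namespace ReachWithin

theorem mono {m n : ℕ} {x y : V} (h : ReachWithin E m x y) (hmn : m ≤ n) :
    ReachWithin E n x y := by
  induction h generalizing n with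
  | refl => exact refl n _
  | cons e _ ih =>
    cases n with
    | zero => omega
    | succ n => exact cons e (ih (by omega))

theorem trans {m n : ℕ} {x y z : V} (hxy : ReachWithin E m x y) (hyz : ReachWithin E n y z) :
    ReachWithin E (m + n) x z := by
  induction hxy with
  | refl => exact hyz.mono (by omega)
  | cons e _ ih => exact (cons e (ih hyz)).mono (by omega)

theorem of_walk : ∀ {k : ℕ} (p : Fin (k + 1) → V), (∀ i : Fin k, E (p i.castSucc) (p i.succ)) →
    ReachWithin E k (p 0) (p (Fin.last k))
  | 0, p, _ => refl 0 (p 0)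
  | _ + 1, p, hp => cons (hp 0) (of_walk (fun i => p i.succ) fun i => hp i.succ)

theorem exists_crossing_edge {A : Set V} {n : ℕ} {x y : V} (h : ReachWithin E n x y)
    (hx : x ∈ A) (hy : y ∉ A) :
    ∃ α β m m', α ∈ A ∧ β ∉ A ∧ E α β ∧ ReachWithin E m x α ∧ ReachWithin E m' β y ∧
      m + m' + 1 ≤ n := by
  induction h with
  | refl => exact absurd hx hy
  | @cons n x z y e hzy ih =>
    by_cases hz : z ∈ A
    · obtain ⟨α, β, m, m', hα, hβ, hαβ, hxα, hβy, hle⟩ := ih hz hy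
      exact ⟨α, β, m + 1, m', hα, hβ, hαβ, cons e hxα, hβy, by omega⟩
    · exact ⟨x, z, 0, n, hx, hz, e, refl 0 x, hzy, by omega⟩

end ReachWithin

theorem exists_injective_walk_suffix {k : ℕ} {p : Fin (k + 1) → V} (hinj : Function.Injective p)
    (hp : ∀ i : Fin k, E (p i.castSucc) (p i.succ)) (i : Fin (k + 1)) :
    ∃ q : Fin (k - i + 1) → V, Function.Injective q ∧
      (∀ t : Fin (k - i), E (q t.castSucc) (q t.succ)) ∧ q 0 = p i ∧
      q (Fin.last (k - i)) = p (Fin.last k) := by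
  refine ⟨fun t => p ⟨i + t, by omega⟩, fun s t hst => ?_, fun t => hp ⟨i + t, by omega⟩, ?_, ?_⟩
  · have := Fin.val_eq_of_eq (hinj hst)
    exact Fin.ext (by simpa using this)
  · simp
  · show p _ = p _
    congr 1
    ext
    simp only [Fin.val_last]
    omega

theorem ReachWithin.exists_injective_walk {n : ℕ} {x y : V} (h : ReachWithin E n x y) :
    ∃ k ≤ n, ∃ p : Fin (k + 1) → V, Function.Injective p ∧
      (∀ i : Fin k, E (p i.castSucc) (p i.succ)) ∧ p 0 = x ∧ p (Fin.last k) = y := by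
  induction h with
  | refl n x =>
    exact ⟨0, n.zero_le, fun _ => x, fun s t _ => Subsingleton.elim (α := Fin 1) s t, nofun,
      rfl, rfl⟩
  | @cons n x z y e _ ih =>
    obtain ⟨k, hk, p, hinj, hp, rfl, rfl⟩ := ih
    by_cases hx : x ∈ Set.range p
    · -- a cycle through `x`: keep only the part of the path after `x`
      obtain ⟨i, rfl⟩ := hx
      obtain ⟨q, hq⟩ := exists_injective_walk_suffix hinj hp i
      exact ⟨k - i, by omega, q, hq⟩
    refine ⟨k + 1, by omega, Fin.cons x p, Fin.cons_injective_iff.mpr ⟨hx, hinj⟩,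
      fun i => ?_, rfl, rfl⟩
    cases i using Fin.cases with
    | zero => exact e
    | succ i => simpa only [← Fin.succ_castSucc, Fin.cons_succ] using hp i

theorem dipower_iff {r : ℕ} {x y : V} : dipower E r x y ↔ x ≠ y ∧ ReachWithin E r x y := by
  constructor
  · rintro ⟨k, p, hk, hkr, hinj, hp, rfl, rfl⟩
    refine ⟨fun h => ?_, (ReachWithin.of_walk p hp).mono hkr⟩
    have := Fin.val_eq_of_eq (hinj h)
    simp at this
    omega
  · rintro ⟨hxy, h⟩
    obtain ⟨k, hkr, p, hinj, hp, rfl, rfl⟩ := h.exists_injective_walk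
    refine ⟨k, p, Nat.one_le_iff_ne_zero.mpr fun hk => hxy ?_, hkr, hinj, hp, rfl, rfl⟩
    subst hk
    rfl

theorem card_le_rank_of_isIndMatching [Fintype V] {r : ℕ} {A : Set V} {M : Finset (V × V)}
    (hM : IsIndMatching (cutRel (dipower E r) A Aᶜ) M) :
    M.card ≤ (cutMatrix E A Aᶜ).rank := by
  have hcross : ∀ e : M, ∃ α β m m', α ∈ A ∧ β ∉ A ∧ E α β ∧
      ReachWithin E m e.1.1 α ∧ ReachWithin E m' β e.1.2 ∧ m + m' + 1 ≤ r := fun e => by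
    obtain ⟨ha, hb, hab⟩ := hM.1 e e.2
    exact (dipower_iff.mp hab).2.exists_crossing_edge ha hb
  choose α β m m' hα hβ hαβ hreach hreach' hle using hcross
  have hno_shortcut : ∀ i j : M, i ≠ j → m j ≤ m i → ¬E (α j) (β i) := by
    intro i j hij hm hE
    have hj := (hM.1 j j.2).1
    have hi := (hM.1 i i.2).2.1
    have hpow : dipower E r j.1.1 i.1.2 := dipower_iff.mpr
      ⟨fun h => hi (h ▸ hj), ((hreach j).trans (.cons hE (hreach' i))).mono (by grind)⟩
    exact (hM.2 j j.2 i i.2 (Subtype.coe_ne_coe.mpr hij.symm) _ (.inl rfl) _ (.inr rfl)).2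
      ⟨hj, hi, hpow⟩
  let N := (cutMatrix E A Aᶜ).submatrix (fun i : M => ⟨β i, hβ i⟩) (fun j : M => ⟨α j, hα j⟩)
  have hdet : N.det = 1 := by
    refine N.det_eq_one_of_apply_eq_one_apply m fun i j hm => ?_
    by_cases hij : i = j
    · subst hij
      simp [N, cutMatrix, hαβ]
    · simp [N, cutMatrix, hij, hno_shortcut i j hij hm]
  calc M.card = N.rank := by
        rw [N.rank_of_isUnit ((N.isUnit_iff_isUnit_det).mpr (hdet ▸ isUnit_one)),
          Fintype.card_coe]
    _ ≤ (cutMatrix E A Aᶜ).rank := Matrix.rank_submatrix_le _ _ _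

theorem nu_cutRel_dipower_le_rank [Fintype V] (r : ℕ) (A : Set V) :
    nu (cutRel (dipower E r) A Aᶜ) ≤ (cutMatrix E A Aᶜ).rank :=
  csSup_le' fun _ ⟨_, hM, hcard⟩ => hcard ▸ card_le_rank_of_isIndMatching hM

theorem bimimCut_dipower_le_bicutrk [Fintype V] (r : ℕ) (A : Set V) :
    bimimCut (dipower E r) A ≤ bicutrk E A := by
  have hcompl := nu_cutRel_dipower_le_rank (E := E) r Aᶜ
  rw [compl_compl] at hcompl
  exact add_le_add (nu_cutRel_dipower_le_rank r A) (hcompl.trans_eq (by congr!))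

theorem bicutrk_le_card [Fintype V] (A : Set V) : bicutrk E A ≤ 2 * Fintype.card V := by
  have h₁ := (cutMatrix E A Aᶜ).rank_le_card_width.trans (Fintype.card_subtype_le _)
  have h₂ := (cutMatrix E Aᶜ A).rank_le_card_width.trans (Fintype.card_subtype_le _)
  unfold bicutrk
  omega

theorem bicutrk_le_birwidth [Fintype V] (bd : BranchDecomp V) {t₁ t₂ : bd.L}
    (hadj : bd.T.Adj t₁ t₂) : bicutrk E (bd.side t₁ t₂) ≤ birwidth bd E :=
  le_csSup ⟨2 * Fintype.card V, fun _ ⟨_, _, _, hn⟩ => hn ▸ bicutrk_le_card _⟩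
    ⟨t₁, t₂, hadj, rfl⟩

end

theorem stmt_5_general {V : Type} [Fintype V] (E : V → V → Prop) (r w : ℕ)
    (bd : BranchDecomp V) (h : birwidth bd E ≤ w) :
    bd.width (dipower E r) ≤ w :=
  csSup_le' fun _ ⟨_, _, hadj, hn⟩ =>
    hn ▸ (bimimCut_dipower_le_bicutrk r _).trans ((bicutrk_le_birwidth bd hadj).trans h)

theorem stmt_5 {V : Type} [Fintype V] (E : V → V → Prop) (r w : ℕ)
    (hr : 1 ≤ r) (hw : 1 ≤ w) (bd : BranchDecomp V) (h : birwidth bd E ≤ w) :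
    bd.width (dipower E r) ≤ w :=
  stmt_5_general E r w bd h
end

section
/- Let G be a digraph, let r be a positive integer, and let (A, B) be a partition of V(G). Then ν(G^r[A→B]) ≤ r · ν(G[A→B]). -/
open scoped Classical

/-!
An edge `(a, b)` of `G^r[A→B]` comes from a walk of length at most `r` from `A` to `B`, which
crosses from `A` to `B` along some edge `(x, y)` of `G[A→B]` after `d < r` steps. By pigeonhole,
some value of `d` is shared by at least `ν(G^r[A→B]) / r` edges of a maximum induced matching.
Their crossing edges form an induced matching of `G[A→B]`: if `x_e → y_f` were an edge for two
matching edges `e ≠ f` with the same `d`, following the walk of `e` up to `x_e` and then the walk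
of `f` from `y_f` would give a walk of length at most `r` from `a_e` to `b_f`, making `(a_e, b_f)`
an edge of `G^r[A→B]`.
-/

namespace List

variable {α : Type*}

theorem IsChain.exists_nodup {R : α → α → Prop} {l : List α} (hl : l.IsChain R) :
    ∃ l' : List α, l'.IsChain R ∧ l'.Nodup ∧ l'.head? = l.head? ∧ l'.getLast? = l.getLast? ∧
      l'.length ≤ l.length := by
  induction hn : l.length using Nat.strong_induction_on generalizing l with
  | _ n ih =>
  by_cases hnd : l.Nodup
  · exact ⟨l, hl, hnd, rfl, rfl, hn.le⟩
  obtain ⟨v, hv⟩ : ∃ v, [v, v] <+ l := by simpa [nodup_iff_sublist] using hnd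
  obtain ⟨r₁, r₂, rfl, h₁, h₂⟩ := cons_sublist_iff.1 hv
  obtain ⟨s, m, rfl⟩ := append_of_mem h₁
  obtain ⟨m', u, rfl⟩ := append_of_mem (singleton_sublist.1 h₂)
  -- cut out the closed walk between the two visits of `v`
  have hshort : (s ++ v :: u).IsChain R := by
    rw [append_assoc, cons_append, isChain_split] at hl
    have hvu := hl.2
    rw [← cons_append, ← append_assoc, isChain_split] at hvu
    exact isChain_split.2 ⟨hl.1, hvu.2⟩
  obtain ⟨l', hc, hnd', hh, hlast, hlen⟩ :=
    ih _ (by simp only [← hn, length_append, length_cons]; omega) hshort rfl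
  refine ⟨l', hc, hnd', by simp [hh, head?_append], by simp [hlast, getLast?_append, getLast?_cons],
    ?_⟩
  simp only [← hn, length_append, length_cons] at hlen ⊢
  omega

theorem exists_eq_append_cons_cons_of_not_mem_of_mem {B : Set α} :
    ∀ {l : List α} {a b : α}, l.head? = some a → a ∉ B → l.getLast? = some b → b ∈ B →
      ∃ s x y t, l = s ++ x :: y :: t ∧ x ∉ B ∧ y ∈ B
  | [], _, _, ha, _, _, _ => by simp at ha
  | [_], _, _, ha, haB, hb, hbB => by
    simp only [head?_cons, getLast?_singleton, Option.some.injEq] at ha hb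
    exact absurd (ha ▸ hb ▸ hbB) haB
  | a :: c :: l, _, _, ha, haB, hb, hbB => by
    simp only [head?_cons, Option.some.injEq] at ha
    subst ha
    by_cases hc : c ∈ B
    · exact ⟨[], a, c, l, rfl, haB, hc⟩
    · rw [getLast?_cons_cons] at hb
      obtain ⟨s, x, y, t, hl, hx, hy⟩ := exists_eq_append_cons_cons_of_not_mem_of_mem rfl hc hb hbB
      exact ⟨a :: s, x, y, t, by rw [hl, cons_append], hx, hy⟩

end List

section Power

variable {V : Type} {E : V → V → Prop} {r : ℕ} {a b : V}

theorem exists_isChain_of_dipower (h : dipower E r a b) :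
    ∃ l : List V, l.IsChain E ∧ l.head? = some a ∧ l.getLast? = some b ∧ l.length ≤ r + 1 := by
  obtain ⟨k, p, -, hk, -, hp, rfl, rfl⟩ := h
  refine ⟨List.ofFn p, List.isChain_ofFn.2 fun i hi => hp ⟨i, by omega⟩, by simp, ?_, by simpa⟩
  rw [List.getLast?_eq_getElem?, List.getElem?_ofFn]
  simp [Fin.last]

theorem dipower_of_isChain_of_nodup {l : List V} (hc : l.IsChain E) (hnd : l.Nodup)
    (ha : l.head? = some a) (hb : l.getLast? = some b) (hab : a ≠ b) (hlen : l.length ≤ r + 1) :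
    dipower E r a b := by
  obtain ⟨t, rfl⟩ := List.head?_eq_some_iff.1 ha
  have ht : t ≠ [] := by
    rintro rfl
    exact hab (Option.some.inj hb)
  exact ⟨t.length, (a :: t).get, List.length_pos_iff.2 ht, by simpa using hlen,
    List.nodup_iff_injective_get.1 hnd, fun i => List.isChain_iff_getElem.1 hc i (by simp), rfl,
    by simpa [List.getLast?_eq_getElem?] using hb⟩

theorem dipower_of_isChain {l : List V} (hc : l.IsChain E) (ha : l.head? = some a)
    (hb : l.getLast? = some b) (hab : a ≠ b) (hlen : l.length ≤ r + 1) : dipower E r a b := by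
  obtain ⟨l', hc', hnd, hh, hl, hlen'⟩ := hc.exists_nodup
  exact dipower_of_isChain_of_nodup hc' hnd (hh.trans ha) (hl.trans hb) hab (hlen'.trans hlen)

end Power

section Crossing

variable {V : Type} {E : V → V → Prop} {r : ℕ} {B : Set V} {a b : V}

structure IsCrossingWalk (E : V → V → Prop) (r : ℕ) (B : Set V) (a b : V) (s : List V) (x y : V)
    (t : List V) : Prop where
  isChain : (s ++ x :: y :: t).IsChain E
  head?_eq : (s ++ x :: y :: t).head? = some a
  getLast?_eq : (s ++ x :: y :: t).getLast? = some b
  length_le : (s ++ x :: y :: t).length ≤ r + 1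
  not_mem : x ∉ B
  mem : y ∈ B

theorem exists_isCrossingWalk (h : dipower E r a b) (ha : a ∉ B) (hb : b ∈ B) :
    ∃ s x y t, IsCrossingWalk E r B a b s x y t := by
  obtain ⟨l, hc, hh, hl, hlen⟩ := exists_isChain_of_dipower h
  obtain ⟨s, x, y, t, rfl, hx, hy⟩ :=
    List.exists_eq_append_cons_cons_of_not_mem_of_mem hh ha hl hb
  exact ⟨s, x, y, t, ⟨hc, hh, hl, hlen, hx, hy⟩⟩

namespace IsCrossingWalk

variable {s t : List V} {x y : V}

theorem rel (h : IsCrossingWalk E r B a b s x y t) : E x y :=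
  (List.isChain_append_cons_cons.1 h.isChain).2.1

theorem length_lt (h : IsCrossingWalk E r B a b s x y t) : s.length < r := by
  have := h.length_le
  simp only [List.length_append, List.length_cons] at this
  omega

theorem dipower_of_rel {a' b' x' y' : V} {s' t' : List V} (h : IsCrossingWalk E r B a b s x y t)
    (h' : IsCrossingWalk E r B a' b' s' x' y' t') (hs : s.length = s'.length) (hE : E x y')
    (hne : a ≠ b') : dipower E r a b' := by
  refine dipower_of_isChain (l := s ++ x :: y' :: t') ?_ ?_ ?_ hne ?_
  · exact List.isChain_append_cons_cons.2 ⟨(List.isChain_append_cons_cons.1 h.isChain).1, hE,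
      (List.isChain_append_cons_cons.1 h'.isChain).2.2⟩
  · simpa [List.head?_append] using h.head?_eq
  · simpa [List.getLast?_append_cons] using h'.getLast?_eq
  · have := h'.length_le
    simp only [List.length_append, List.length_cons] at this ⊢
    omega

end IsCrossingWalk

end Crossing

section InducedMatching

variable {V : Type} {D : V → V → Prop} {A B : Set V}

theorem IsIndMatching.ne_and_not_rel {M : Finset (V × V)} (hM : IsIndMatching D M) {e f : V × V}
    (he : e ∈ M) (hf : f ∈ M) (hef : e ≠ f) : e.1 ≠ f.2 ∧ ¬D e.1 f.2 :=
  hM.2 e he f hf hef _ (Or.inl rfl) _ (Or.inr rfl)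

-- A shared endpoint of two edges would itself give an edge from the tail of one to the head of
-- the other.
theorem isIndMatching_cutRel (hAB : Disjoint A B) {M : Finset (V × V)}
    (hM : ∀ e ∈ M, cutRel D A B e.1 e.2) (hcross : ∀ e ∈ M, ∀ f ∈ M, e ≠ f → ¬D e.1 f.2) :
    IsIndMatching (cutRel D A B) M := by
  refine ⟨hM, fun e he f hf hef u hu w hw => ?_⟩
  obtain ⟨heA, heB, heD⟩ := hM e he
  obtain ⟨hfA, hfB, hfD⟩ := hM f hf
  have hnot := hcross e he f hf hef
  rcases hu with rfl | rfl <;> rcases hw with rfl | rfl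
  · exact ⟨fun h => hnot (h ▸ hfD), fun h => hAB.ne_of_mem hfA h.2.1 rfl⟩
  · exact ⟨hAB.ne_of_mem heA hfB, fun h => hnot h.2.2⟩
  · exact ⟨(hAB.ne_of_mem hfA heB).symm, fun h => hAB.ne_of_mem h.1 heB rfl⟩
  · exact ⟨fun h => hnot (h ▸ heD), fun h => hAB.ne_of_mem h.1 heB rfl⟩

theorem IsIndMatching.not_rel_of_isCrossingWalk {E : V → V → Prop} {r : ℕ} {M : Finset (V × V)}
    (hM : IsIndMatching (cutRel (dipower E r) A B) M) {e f : V × V} (he : e ∈ M) (hf : f ∈ M)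
    (hef : e ≠ f) {s t s' t' : List V} {x y x' y' : V}
    (hwe : IsCrossingWalk E r B e.1 e.2 s x y t) (hwf : IsCrossingWalk E r B f.1 f.2 s' x' y' t')
    (hs : s.length = s'.length) : ¬E x y' := fun hE =>
  have hne := hM.ne_and_not_rel he hf hef
  hne.2 ⟨(hM.1 e he).1, (hM.1 f hf).2.1, hwe.dipower_of_rel hwf hs hE hne.1⟩

variable [Fintype V]

theorem bddAbove_card_isIndMatching (D : V → V → Prop) :
    BddAbove {n | ∃ M : Finset (V × V), IsIndMatching D M ∧ M.card = n} :=
  ⟨Fintype.card (V × V), by rintro n ⟨M, -, rfl⟩; exact M.card_le_univ⟩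

theorem IsIndMatching.card_le_nu_s6 {M : Finset (V × V)} (hM : IsIndMatching D M) : M.card ≤ nu D :=
  le_csSup (bddAbove_card_isIndMatching D) ⟨M, hM, rfl⟩

theorem exists_isIndMatching_card_eq_nu (D : V → V → Prop) :
    ∃ M : Finset (V × V), IsIndMatching D M ∧ M.card = nu D :=
  have hne : {n | ∃ M : Finset (V × V), IsIndMatching D M ∧ M.card = n}.Nonempty :=
    ⟨0, ∅, ⟨by simp, by simp⟩, rfl⟩
  Nat.sSup_mem hne (bddAbove_card_isIndMatching D)

theorem card_le_nu_cutRel {ι : Type*} {F : Finset ι} (g : ι → V × V) (hAB : Disjoint A B)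
    (hg : ∀ i ∈ F, cutRel D A B (g i).1 (g i).2)
    (hcross : ∀ i ∈ F, ∀ j ∈ F, i ≠ j → ¬D (g i).1 (g j).2) : F.card ≤ nu (cutRel D A B) := by
  have hinj : Set.InjOn g F := by
    intro i hi j hj hij
    by_contra hne
    exact hcross i hi j hj hne (congrArg Prod.snd hij ▸ (hg i hi).2.2)
  rw [← Finset.card_image_of_injOn hinj]
  refine (isIndMatching_cutRel hAB ?_ ?_).card_le_nu_s6
  · simpa only [Finset.forall_mem_image] using hg
  · simp only [Finset.forall_mem_image]
    exact fun i hi j hj hne => hcross i hi j hj fun h => hne (h ▸ rfl)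

end InducedMatching

theorem Finset.exists_card_le_mul_card_filter_eq {α : Type*} (s : Finset α) (f : α → ℕ) {n : ℕ}
    (hf : ∀ a ∈ s, f a < n) : ∃ i, s.card ≤ n * {a ∈ s | f a = i}.card := by
  rcases s.eq_empty_or_nonempty with rfl | ⟨a, ha⟩
  · exact ⟨0, by simp⟩
  have hmaps : Set.MapsTo f s (range n) := fun a ha => mem_range.2 (hf a ha)
  have hsum : ∑ _i ∈ range n, s.card ≤ ∑ i ∈ range n, n * {a ∈ s | f a = i}.card := by
    rw [← mul_sum, ← card_eq_sum_card_fiberwise hmaps, sum_const, card_range, smul_eq_mul]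
  obtain ⟨i, -, hi⟩ := exists_le_of_sum_le (s := range n) ⟨f a, hmaps ha⟩ hsum
  exact ⟨i, hi⟩

theorem stmt_6_general {V : Type} [Fintype V] (E : V → V → Prop) (r : ℕ)
    (A B : Set V) (hU : A ∪ B = Set.univ) (hI : A ∩ B = ∅) :
    nu (cutRel (dipower E r) A B) ≤ r * nu (cutRel E A B) := by
  obtain rfl : A = Bᶜ :=
    IsCompl.eq_compl ⟨Set.disjoint_iff_inter_eq_empty.2 hI, codisjoint_iff.2 hU⟩
  obtain ⟨M, hM, hcard⟩ := exists_isIndMatching_card_eq_nu (cutRel (dipower E r) Bᶜ B)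
  rw [← hcard]
  rcases M.eq_empty_or_nonempty with rfl | ⟨e₀, -⟩
  · simp
  have : Nonempty V := ⟨e₀.1⟩
  choose! s x y t hwalk using fun e (he : e ∈ M) =>
    exists_isCrossingWalk (hM.1 e he).2.2 (hM.1 e he).1 (hM.1 e he).2.1
  obtain ⟨i, hi⟩ := M.exists_card_le_mul_card_filter_eq (fun e => (s e).length)
    fun e he => (hwalk e he).length_lt
  refine hi.trans (Nat.mul_le_mul_left r
    (card_le_nu_cutRel (fun e => (x e, y e)) disjoint_compl_left ?_ ?_))
  · simp only [Finset.mem_filter]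
    exact fun e he => ⟨(hwalk e he.1).not_mem, (hwalk e he.1).mem, (hwalk e he.1).rel⟩
  · simp only [Finset.mem_filter]
    exact fun e he f hf hef => hM.not_rel_of_isCrossingWalk he.1 hf.1 hef (hwalk e he.1)
      (hwalk f hf.1) (he.2.trans hf.2.symm)

theorem stmt_6 {V : Type} [Fintype V] (E : V → V → Prop) (r : ℕ) (hr : 1 ≤ r)
    (A B : Set V) (hU : A ∪ B = Set.univ) (hI : A ∩ B = ∅) :
    nu (cutRel (dipower E r) A B) ≤ r * nu (cutRel E A B) :=
  stmt_6_general E r A B hU hI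
end

section
/- Let G be a reflexive interval digraph with at least two vertices, i.e., G has a representation {(S_v, T_v) : v ∈ V(G)} by pairs of nonempty closed real intervals with (v, w) ∈ E(G) ⇔ S_v ∩ T_w ≠ ∅ and S_v ∩ T_v ≠ ∅ for every v. Then lbimimw(G) ≤ 2. -/
open scoped Classical

/-!
Pick a point `p v ∈ S v ∩ T v` and order the vertices by `p`. If every vertex of `A` precedes
every vertex of `B`, then each `S u` (`u ∈ A`) starts before each `T w` (`w ∈ B`) ends, so
`u → w` is an edge iff `T w` starts before `S u` ends. Such a threshold (Ferrers) relation has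
no induced matching of size two, and symmetrically for the edges from `B` to `A`. A caterpillar
whose leaves are attached in increasing order of `p` has only cuts of this kind, besides cuts
that split off a single leaf, across which an induced matching has at most one edge per
direction anyway.
-/

section InducedMatching

variable {V : Type}

def IsFerrers (D : V → V → Prop) : Prop :=
  ∀ ⦃u w u' w'⦄, D u w → D u' w' → D u w' ∨ D u' w

lemma nu_le_one_of_isFerrers {D : V → V → Prop} (hD : IsFerrers D) : nu D ≤ 1 := by
  refine csSup_le' ?_
  rintro n ⟨M, ⟨hedge, hind⟩, rfl⟩
  by_contra! hM
  obtain ⟨e, he, f, hf, hef⟩ := Finset.one_lt_card.mp hM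
  rcases hD (hedge e he) (hedge f hf) with h | h
  · exact (hind e he f hf hef e.1 (.inl rfl) f.2 (.inr rfl)).2 h
  · exact (hind f hf e he hef.symm f.1 (.inl rfl) e.2 (.inr rfl)).2 h

lemma isFerrers_cutRel_of_subsingleton_left (E : V → V → Prop) {A : Set V} (B : Set V)
    (hA : A.Subsingleton) : IsFerrers (cutRel E A B) := by
  rintro u w u' w' ⟨hu, -, -⟩ ⟨hu', hw', huw'⟩
  exact .inl (hA hu hu' ▸ ⟨hu', hw', huw'⟩)

lemma isFerrers_cutRel_of_subsingleton_right (E : V → V → Prop) (A : Set V) {B : Set V}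
    (hB : B.Subsingleton) : IsFerrers (cutRel E A B) := by
  rintro u w u' w' ⟨hu, hw, huw⟩ ⟨-, hw', -⟩
  exact .inl (hB hw hw' ▸ ⟨hu, hw, huw⟩)

lemma bimimCut_compl (E : V → V → Prop) (A : Set V) : bimimCut E Aᶜ = bimimCut E A := by
  rw [bimimCut, bimimCut, compl_compl, add_comm]

lemma bimimCut_le_two_of_subsingleton (E : V → V → Prop) {A : Set V} (hA : A.Subsingleton) :
    bimimCut E A ≤ 2 :=
  add_le_add (nu_le_one_of_isFerrers (isFerrers_cutRel_of_subsingleton_left E _ hA))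
    (nu_le_one_of_isFerrers (isFerrers_cutRel_of_subsingleton_right E _ hA))

end InducedMatching

section LinearCut

variable {V α : Type} [LinearOrder α]

def IsLowerCut (p : V → α) (A : Set V) : Prop :=
  ∀ u ∈ A, ∀ w ∉ A, p u ≤ p w

def IsLinearCut (p : V → α) (A : Set V) : Prop :=
  A.Subsingleton ∨ Aᶜ.Subsingleton ∨ IsLowerCut p A ∨ IsLowerCut p Aᶜ

lemma isLowerCut_setOf_le {n : ℕ} {p : V → α} {idx : V ≃ Fin n}
    (hp : Monotone (p ∘ idx.symm)) (m : ℕ) : IsLowerCut p {v | (idx v : ℕ) ≤ m} := by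
  intro u hu w hw
  simpa using hp (show idx u ≤ idx w from Fin.le_def.2 (by simp at hu hw; omega))

lemma exists_equiv_fin_monotone [Finite V] {n : ℕ} (hn : Nat.card V = n) (p : V → α) :
    ∃ idx : V ≃ Fin n, Monotone (p ∘ idx.symm) := by
  let e := (Finite.equivFinOfCardEq hn).symm
  exact ⟨((Tuple.sort (p ∘ e)).trans e).symm,
    by simpa [Function.comp_assoc] using Tuple.monotone_sort (p ∘ e)⟩

end LinearCut

section IntervalDigraph

-- `[a u, b u]` and `[c w, d w]` play the roles of `S u` and `T w`, and `p v ∈ S v ∩ T v`.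
variable {V α : Type} [LinearOrder α] {E : V → V → Prop} {a b c d p : V → α}

lemma isFerrers_cutRel_of_le (hE : ∀ u w, E u w ↔ a u ≤ d w ∧ c w ≤ b u)
    (ha : ∀ v, a v ≤ p v) (hd : ∀ v, p v ≤ d v) {A B : Set V}
    (hAB : ∀ u ∈ A, ∀ w ∈ B, p u ≤ p w) : IsFerrers (cutRel E A B) := by
  have hlow : ∀ u ∈ A, ∀ w ∈ B, a u ≤ d w := fun u hu w hw =>
    (ha u).trans ((hAB u hu w hw).trans (hd w))
  rintro u w u' w' ⟨hu, hw, huw⟩ ⟨hu', hw', huw'⟩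
  rw [hE] at huw huw'
  rcases le_total (b u) (b u') with h | h
  · exact .inr ⟨hu', hw, (hE _ _).2 ⟨hlow u' hu' w hw, huw.2.trans h⟩⟩
  · exact .inl ⟨hu, hw', (hE _ _).2 ⟨hlow u hu w' hw', huw'.2.trans h⟩⟩

lemma isFerrers_cutRel_of_ge (hE : ∀ u w, E u w ↔ a u ≤ d w ∧ c w ≤ b u)
    (hb : ∀ v, p v ≤ b v) (hc : ∀ v, c v ≤ p v) {A B : Set V}
    (hBA : ∀ u ∈ A, ∀ w ∈ B, p w ≤ p u) : IsFerrers (cutRel E A B) := by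
  have hhigh : ∀ u ∈ A, ∀ w ∈ B, c w ≤ b u := fun u hu w hw =>
    (hc w).trans ((hBA u hu w hw).trans (hb u))
  rintro u w u' w' ⟨hu, hw, huw⟩ ⟨hu', hw', huw'⟩
  rw [hE] at huw huw'
  rcases le_total (d w) (d w') with h | h
  · exact .inl ⟨hu, hw', (hE _ _).2 ⟨huw.1.trans h, hhigh u hu w' hw'⟩⟩
  · exact .inr ⟨hu', hw, (hE _ _).2 ⟨huw'.1.trans h, hhigh u' hu' w hw⟩⟩

lemma bimimCut_le_two_of_isLowerCut (hE : ∀ u w, E u w ↔ a u ≤ d w ∧ c w ≤ b u)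
    (hp : ∀ v, a v ≤ p v ∧ p v ≤ b v ∧ c v ≤ p v ∧ p v ≤ d v) {A : Set V}
    (hA : IsLowerCut p A) : bimimCut E A ≤ 2 :=
  add_le_add
    (nu_le_one_of_isFerrers <| isFerrers_cutRel_of_le hE (fun v => (hp v).1)
      (fun v => (hp v).2.2.2) hA)
    (nu_le_one_of_isFerrers <| isFerrers_cutRel_of_ge hE (fun v => (hp v).2.1)
      (fun v => (hp v).2.2.1) fun u hu w hw => hA w hw u hu)

lemma bimimCut_le_two_of_isLinearCut (hE : ∀ u w, E u w ↔ a u ≤ d w ∧ c w ≤ b u)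
    (hp : ∀ v, a v ≤ p v ∧ p v ≤ b v ∧ c v ≤ p v ∧ p v ≤ d v) {A : Set V}
    (hA : IsLinearCut p A) : bimimCut E A ≤ 2 := by
  rcases hA with hA | hA | hA | hA
  · exact bimimCut_le_two_of_subsingleton E hA
  · exact bimimCut_compl E A ▸ bimimCut_le_two_of_subsingleton E hA
  · exact bimimCut_le_two_of_isLowerCut hE hp hA
  · exact bimimCut_compl E A ▸ bimimCut_le_two_of_isLowerCut hE hp hA

end IntervalDigraph

namespace SimpleGraph

variable {W : Type} {H : SimpleGraph W} {t₁ t₂ : W}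

lemma reachable_deleteEdges_or_of_reachable {x : W} (h : H.Reachable t₁ x) :
    (H.deleteEdges {s(t₁, t₂)}).Reachable t₁ x ∨ (H.deleteEdges {s(t₁, t₂)}).Reachable t₂ x := by
  rw [reachable_iff_reflTransGen] at h
  induction h with
  | refl => exact .inl .rfl
  | @tail y x _ hadj ih =>
    by_cases he : s(y, x) = s(t₁, t₂)
    · rcases Sym2.eq_iff.1 he with ⟨-, rfl⟩ | ⟨-, rfl⟩
      exacts [.inr .rfl, .inl .rfl]
    · have hadj' : (H.deleteEdges {s(t₁, t₂)}).Adj y x := (deleteEdges_adj ..).2 ⟨hadj, he⟩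
      exact ih.imp (·.trans hadj'.reachable) (·.trans hadj'.reachable)

def IsSingleEdgeCut (H : SimpleGraph W) (t₁ t₂ : W) (X : Set W) : Prop :=
  t₁ ∈ X ∧ t₂ ∉ X ∧ ∀ ⦃x y⦄, H.Adj x y → x ∈ X → y ∉ X → s(x, y) = s(t₁, t₂)

namespace IsSingleEdgeCut

variable {X : Set W}

lemma compl (hX : H.IsSingleEdgeCut t₁ t₂ X) : H.IsSingleEdgeCut t₂ t₁ Xᶜ :=
  ⟨hX.2.1, not_not.2 hX.1, fun x y hxy hx hy =>
    by rw [Sym2.eq_swap, hX.2.2 hxy.symm (not_not.1 hy) hx, Sym2.eq_swap]⟩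

lemma mem_of_reachable (hX : H.IsSingleEdgeCut t₁ t₂ X) {x y : W}
    (hxy : (H.deleteEdges {s(t₁, t₂)}).Reachable x y) (hx : x ∈ X) : y ∈ X := by
  obtain ⟨q⟩ := hxy
  induction q with
  | nil => exact hx
  | cons hadj _ ih =>
    rw [deleteEdges_adj] at hadj
    by_contra hy
    exact hadj.2 (hX.2.2 hadj.1 hx fun h => hy (ih h))

lemma isBridge (hX : H.IsSingleEdgeCut t₁ t₂ X) : H.IsBridge s(t₁, t₂) :=
  isBridge_iff.2 fun h => hX.2.1 (hX.mem_of_reachable h hX.1)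

lemma reachable_iff (hX : H.IsSingleEdgeCut t₁ t₂ X) (hH : H.Preconnected) {x : W} :
    (H.deleteEdges {s(t₁, t₂)}).Reachable t₁ x ↔ x ∈ X := by
  refine ⟨fun h => hX.mem_of_reachable h hX.1, fun hx => ?_⟩
  exact (reachable_deleteEdges_or_of_reachable (hH t₁ x)).resolve_right
    fun h => hX.2.1 (hX.mem_of_reachable h.symm hx)

end IsSingleEdgeCut

lemma isSingleEdgeCut_singleton (hadj : H.Adj t₁ t₂) (hleaf : (H.neighborSet t₁).ncard = 1) :
    H.IsSingleEdgeCut t₁ t₂ {t₁} := by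
  obtain ⟨t, ht⟩ := Set.ncard_eq_one.1 hleaf
  obtain rfl : t₂ = t := by rw [← Set.mem_singleton_iff, ← ht]; exact hadj
  refine ⟨rfl, hadj.ne.symm, ?_⟩
  rintro x y hxy rfl -
  rw [← mem_neighborSet, ht] at hxy
  rw [hxy]

lemma isTree_of_isSingleEdgeCut (hH : H.Connected)
    (h : ∀ ⦃t₁ t₂⦄, H.Adj t₁ t₂ → ∃ X, H.IsSingleEdgeCut t₁ t₂ X) : H.IsTree :=
  ⟨hH, isAcyclic_iff_forall_adj_isBridge.2 fun _ _ hadj => (h hadj).choose_spec.isBridge⟩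

end SimpleGraph

lemma IsCaterpillar.connected {L : Type} {T : SimpleGraph L} (hT : IsCaterpillar T) :
    T.Connected := by
  obtain ⟨u, v, q, -, hq⟩ := hT
  have hsupp : ∀ x ∈ q.support, T.Reachable u x := fun x hx => ⟨q.takeUntil x hx⟩
  refine (SimpleGraph.connected_iff_exists_forall_reachable T).2 ⟨u, fun x => ?_⟩
  by_cases hx : x ∈ q.support
  · exact hsupp x hx
  · obtain ⟨y, hy, hxy⟩ := hq x hx
    exact (hsupp y hy).trans hxy.symm.reachable

namespace BranchDecomp

variable {V α : Type} [LinearOrder α] (bd : BranchDecomp V) {t₁ t₂ : bd.L}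

lemma side_eq_preimage {X : Set bd.L} (hX : bd.T.IsSingleEdgeCut t₁ t₂ X) :
    bd.side t₁ t₂ = bd.toLeaf ⁻¹' X :=
  Set.ext fun _ => hX.reachable_iff bd.isTree.1.preconnected

lemma side_subsingleton_of_leaf (hadj : bd.T.Adj t₁ t₂)
    (hleaf : (bd.T.neighborSet t₁).ncard = 1) : (bd.side t₁ t₂).Subsingleton := by
  rw [bd.side_eq_preimage (SimpleGraph.isSingleEdgeCut_singleton hadj hleaf)]
  exact Set.subsingleton_singleton.preimage bd.inj

lemma side_compl_subsingleton_of_leaf (hadj : bd.T.Adj t₁ t₂)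
    (hleaf : (bd.T.neighborSet t₂).ncard = 1) : (bd.side t₁ t₂)ᶜ.Subsingleton := by
  rw [bd.side_eq_preimage (SimpleGraph.isSingleEdgeCut_singleton hadj.symm hleaf).compl,
    Set.preimage_compl, compl_compl]
  exact Set.subsingleton_singleton.preimage bd.inj

lemma isLinearCut_side_of_leaf (p : V → α) (hadj : bd.T.Adj t₁ t₂)
    (hleaf : (bd.T.neighborSet t₁).ncard = 1 ∨ (bd.T.neighborSet t₂).ncard = 1) :
    IsLinearCut p (bd.side t₁ t₂) :=
  hleaf.imp (bd.side_subsingleton_of_leaf hadj) (.inl ∘ bd.side_compl_subsingleton_of_leaf hadj)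

lemma lbimimw_le_width (E : V → V → Prop) (hbd : IsCaterpillar bd.T) :
    lbimimw E ≤ bd.width E :=
  Nat.sInf_le ⟨bd, hbd, rfl⟩

lemma width_le_two {E : V → V → Prop} {a b c d p : V → α}
    (hE : ∀ u w, E u w ↔ a u ≤ d w ∧ c w ≤ b u)
    (hp : ∀ v, a v ≤ p v ∧ p v ≤ b v ∧ c v ≤ p v ∧ p v ≤ d v)
    (hbd : ∀ ⦃t₁ t₂⦄, bd.T.Adj t₁ t₂ → IsLinearCut p (bd.side t₁ t₂)) : bd.width E ≤ 2 :=
  csSup_le' <| by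
    rintro _ ⟨t₁, t₂, hadj, rfl⟩
    exact bimimCut_le_two_of_isLinearCut hE hp (hbd hadj)

end BranchDecomp

section Comb

open Sum

abbrev CombVertex (k : ℕ) : Type := Fin (k + 3) ⊕ Fin (k + 1)

/-- The caterpillar with spine `inr 0 - ⋯ - inr k` and leaves `inl 0, …, inl (k + 2)`: leaf `a`
hangs off spine vertex `a - 1`, except that the ends `inr 0` and `inr k` carry an extra leaf. -/
def comb (k : ℕ) : SimpleGraph (CombVertex k) where
  Adj x y := match x, y with
    | inl _, inl _ => False
    | inl a, inr i => (i : ℕ) = min ((a : ℕ) - 1) k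
    | inr i, inl a => (i : ℕ) = min ((a : ℕ) - 1) k
    | inr i, inr j => (i : ℕ) + 1 = j ∨ (j : ℕ) + 1 = i
  symm := by constructor; rintro (a | i) (b | j) h <;> simp only at * <;> omega
  loopless := by constructor; rintro (a | i) h <;> simp only at h; omega

namespace comb

variable {k : ℕ}

@[simp] lemma adj_inl_inl (a b : Fin (k + 3)) : (comb k).Adj (inl a) (inl b) ↔ False := .rfl

@[simp] lemma adj_inl_inr (a : Fin (k + 3)) (i : Fin (k + 1)) :
    (comb k).Adj (inl a) (inr i) ↔ (i : ℕ) = min ((a : ℕ) - 1) k := .rfl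

@[simp] lemma adj_inr_inl (i : Fin (k + 1)) (a : Fin (k + 3)) :
    (comb k).Adj (inr i) (inl a) ↔ (i : ℕ) = min ((a : ℕ) - 1) k := .rfl

@[simp] lemma adj_inr_inr (i j : Fin (k + 1)) :
    (comb k).Adj (inr i) (inr j) ↔ (i : ℕ) + 1 = j ∨ (j : ℕ) + 1 = i := .rfl

lemma neighborSet_inl (a : Fin (k + 3)) :
    (comb k).neighborSet (inl a) = {inr ⟨min ((a : ℕ) - 1) k, by omega⟩} := by
  ext (b | i) <;> simp [Fin.ext_iff]

lemma ncard_neighborSet_inl (a : Fin (k + 3)) : ((comb k).neighborSet (inl a)).ncard = 1 := by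
  rw [neighborSet_inl, Set.ncard_singleton]

lemma ncard_neighborSet_inr (i : Fin (k + 1)) : ((comb k).neighborSet (inr i)).ncard = 3 := by
  rw [Set.ncard_eq_three]
  refine ⟨if h : (i : ℕ) = 0 then inl 0 else inr ⟨i - 1, by omega⟩, inl ⟨i + 1, by omega⟩,
    if h : (i : ℕ) = k then inl ⟨k + 2, by omega⟩ else inr ⟨i + 1, by omega⟩, ?_, ?_, ?_, ?_⟩
  rotate_left 3
  ext (b | j)
  all_goals
    split_ifs <;>
      simp only [SimpleGraph.mem_neighborSet, Set.mem_insert_iff, Set.mem_singleton_iff,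
        adj_inr_inl, adj_inr_inr, reduceCtorEq, inl.injEq, inr.injEq, Fin.ext_iff, Fin.val_zero,
        ne_eq, not_false_eq_true, false_or, or_false, iff_false] <;>
      omega

-- The only edge joining positions `≤ i + 1` to positions `> i + 1` is `inr i - inr (i + 1)`.
def pos : CombVertex k → ℕ := Sum.elim (fun a => a) (fun i => i + 1)

lemma isSingleEdgeCut_spine {i j : Fin (k + 1)} (hij : (i : ℕ) + 1 = j) :
    (comb k).IsSingleEdgeCut (inr i) (inr j) {x | pos x ≤ i + 1} := by
  refine ⟨by simp [pos], by simp [pos]; omega, ?_⟩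
  rintro (a | q) (b | q') hadj hx hy <;> simp [pos] at hadj hx hy
  · omega
  · omega
  · obtain rfl : q = i := Fin.ext (by omega)
    obtain rfl : q' = j := Fin.ext (by omega)
    rfl

lemma exists_isSingleEdgeCut ⦃t₁ t₂ : CombVertex k⦄ (hadj : (comb k).Adj t₁ t₂) :
    ∃ X, (comb k).IsSingleEdgeCut t₁ t₂ X := by
  rcases t₁ with a | i <;> rcases t₂ with b | j
  · exact hadj.elim
  · exact ⟨_, SimpleGraph.isSingleEdgeCut_singleton hadj (ncard_neighborSet_inl a)⟩
  · exact ⟨_, (SimpleGraph.isSingleEdgeCut_singleton hadj.symm (ncard_neighborSet_inl b)).compl⟩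
  · rcases hadj with hij | hji
    exacts [⟨_, isSingleEdgeCut_spine hij⟩, ⟨_, (isSingleEdgeCut_spine hji).compl⟩]

def downWalk : (q : ℕ) → (hq : q ≤ k) → (comb k).Walk (inr ⟨q, by omega⟩) (inr ⟨0, by omega⟩)
  | 0, _ => .nil
  | q + 1, hq =>
    .cons ((adj_inr_inr ⟨q + 1, by omega⟩ ⟨q, by omega⟩).2 (.inr rfl)) (downWalk q (by omega))

lemma mem_support_downWalk {q : ℕ} (hq : q ≤ k) {x : CombVertex k} :
    x ∈ (downWalk q hq).support ↔ ∃ r : Fin (k + 1), x = inr r ∧ (r : ℕ) ≤ q := by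
  induction q with
  | zero =>
    rw [downWalk, SimpleGraph.Walk.support_nil, List.mem_singleton]
    constructor
    · rintro rfl
      exact ⟨_, rfl, le_rfl⟩
    · rintro ⟨r, rfl, hr⟩
      exact congrArg inr (Fin.ext (Nat.le_zero.1 hr))
  | succ q ih =>
    rw [downWalk, SimpleGraph.Walk.support_cons, List.mem_cons, ih]
    constructor
    · rintro (rfl | ⟨r, rfl, hr⟩)
      exacts [⟨_, rfl, le_rfl⟩, ⟨r, rfl, by omega⟩]
    · rintro ⟨r, rfl, hr⟩
      rcases hr.lt_or_eq with hr | hr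
      · exact .inr ⟨r, rfl, by omega⟩
      · exact .inl (congrArg inr (Fin.ext hr))

lemma isPath_downWalk {q : ℕ} (hq : q ≤ k) : (downWalk q hq).IsPath := by
  induction q with
  | zero => exact .nil
  | succ q ih =>
    refine (ih _).cons ?_
    rw [mem_support_downWalk]
    rintro ⟨r, hr, hrq⟩
    obtain rfl := inr_injective hr
    exact Nat.not_succ_le_self q hrq

lemma isCaterpillar : IsCaterpillar (comb k) := by
  refine ⟨_, _, downWalk k le_rfl, isPath_downWalk le_rfl, ?_⟩
  rintro (a | i) ha
  · exact ⟨_, (mem_support_downWalk _).2 ⟨_, rfl, by omega⟩,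
      (adj_inl_inr a ⟨min (a - 1) k, by omega⟩).2 rfl⟩
  · exact absurd ((mem_support_downWalk _).2 ⟨i, rfl, by omega⟩) ha

lemma isTree : (comb k).IsTree :=
  SimpleGraph.isTree_of_isSingleEdgeCut isCaterpillar.connected exists_isSingleEdgeCut

end comb

def combBD {V : Type} {k : ℕ} (idx : V ≃ Fin (k + 3)) : BranchDecomp V where
  L := CombVertex k
  finL := inferInstance
  T := comb k
  isTree := comb.isTree
  two_le := by simp; omega
  subcubic := by
    rintro (a | i)
    exacts [.inl (comb.ncard_neighborSet_inl a), .inr (comb.ncard_neighborSet_inr i)]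
  toLeaf := inl ∘ idx
  inj := inl_injective.comp idx.injective
  mem_leaf _ := comb.ncard_neighborSet_inl _
  surj := by
    rintro (a | i) h
    · exact ⟨idx.symm a, by simp⟩
    · cases (comb.ncard_neighborSet_inr i).symm.trans h

lemma combBD_isLinearCut {V α : Type} [LinearOrder α] {k : ℕ} {p : V → α}
    {idx : V ≃ Fin (k + 3)} (hp : Monotone (p ∘ idx.symm)) {t₁ t₂ : CombVertex k}
    (hadj : (comb k).Adj t₁ t₂) : IsLinearCut p ((combBD idx).side t₁ t₂) := by
  rcases t₁ with a | i
  · exact (combBD idx).isLinearCut_side_of_leaf p hadj (.inl (comb.ncard_neighborSet_inl a))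
  rcases t₂ with b | j
  · exact (combBD idx).isLinearCut_side_of_leaf p hadj (.inr (comb.ncard_neighborSet_inl b))
  rcases hadj with hij | hji
  · have hside : (combBD idx).side (inr i) (inr j) = {v | (idx v : ℕ) ≤ i + 1} :=
      (combBD idx).side_eq_preimage (comb.isSingleEdgeCut_spine hij)
    exact hside ▸ .inr (.inr (.inl (isLowerCut_setOf_le hp _)))
  · have hside : (combBD idx).side (inr i) (inr j) = {v | (idx v : ℕ) ≤ j + 1}ᶜ :=
      (combBD idx).side_eq_preimage (comb.isSingleEdgeCut_spine hji).compl
    rw [hside]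
    refine .inr (.inr (.inr ?_))
    rw [compl_compl]
    exact isLowerCut_setOf_le hp _

end Comb

section CompleteGraphOnTwo

variable {V : Type}

lemma ncard_neighborSet_top_of_card_eq_two (h : Nat.card V = 2) (t : V) :
    ((⊤ : SimpleGraph V).neighborSet t).ncard = 1 := by
  have : Finite V := Nat.finite_of_card_ne_zero (by omega)
  have := Set.ncard_add_ncard_compl {t}
  rw [Set.ncard_singleton, h] at this
  rw [SimpleGraph.neighborSet_top]
  omega

lemma isCaterpillar_top_of_card_eq_two (h : Nat.card V = 2) :
    IsCaterpillar (⊤ : SimpleGraph V) := by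
  obtain ⟨x, y, hxy, huniv⟩ := Nat.card_eq_two_iff.1 h
  have hadj : (⊤ : SimpleGraph V).Adj x y := hxy
  refine ⟨x, y, hadj.toWalk, hadj.isPath_toWalk, fun w hw => absurd ?_ hw⟩
  have hw : w ∈ ({x, y} : Set V) := huniv ▸ Set.mem_univ w
  rcases hw with rfl | rfl <;> simp [SimpleGraph.Adj.toWalk]

def pairBD (h : Nat.card V = 2) : BranchDecomp V where
  L := V
  finL := Nat.finite_of_card_ne_zero (by omega)
  T := ⊤
  isTree := SimpleGraph.isTree_of_isSingleEdgeCut (isCaterpillar_top_of_card_eq_two h).connected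
    fun _ _ hadj => ⟨_, SimpleGraph.isSingleEdgeCut_singleton hadj
      (ncard_neighborSet_top_of_card_eq_two h _)⟩
  two_le := h.ge
  subcubic t := .inl (ncard_neighborSet_top_of_card_eq_two h t)
  toLeaf := id
  inj := Function.injective_id
  mem_leaf := ncard_neighborSet_top_of_card_eq_two h
  surj t _ := ⟨t, rfl⟩

end CompleteGraphOnTwo

lemma exists_caterpillar_isLinearCut {V α : Type} [LinearOrder α] (h2 : 2 ≤ Nat.card V)
    (p : V → α) : ∃ bd : BranchDecomp V, IsCaterpillar bd.T ∧
      ∀ ⦃t₁ t₂⦄, bd.T.Adj t₁ t₂ → IsLinearCut p (bd.side t₁ t₂) := by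
  have : Finite V := Nat.finite_of_card_ne_zero (by omega)
  obtain h | ⟨k, hk⟩ : Nat.card V = 2 ∨ ∃ k, Nat.card V = k + 3 := by
    rcases h2.eq_or_lt with h | h
    exacts [.inl h.symm, .inr ⟨Nat.card V - 3, by omega⟩]
  · exact ⟨pairBD h, isCaterpillar_top_of_card_eq_two h, fun t₁ _ hadj =>
      (pairBD h).isLinearCut_side_of_leaf p hadj
        (.inl (ncard_neighborSet_top_of_card_eq_two h t₁))⟩
  · obtain ⟨idx, hidx⟩ := exists_equiv_fin_monotone hk p
    exact ⟨combBD idx, comb.isCaterpillar, fun _ _ => combBD_isLinearCut hidx⟩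

theorem stmt_9_general {V : Type} (h2 : 2 ≤ Nat.card V)
    (E : V → V → Prop) (S T : V → Set ℝ)
    (hS : ∀ v, ∃ a b : ℝ, a ≤ b ∧ S v = Set.Icc a b)
    (hT : ∀ v, ∃ a b : ℝ, a ≤ b ∧ T v = Set.Icc a b)
    (hrep : ∀ v w, E v w ↔ (S v ∩ T w).Nonempty)
    (hrefl : ∀ v, (S v ∩ T v).Nonempty) :
    lbimimw E ≤ 2 := by
  choose a b hab hSab using hS
  choose c d hcd hTcd using hT
  have hmeet : ∀ u w, (S u ∩ T w).Nonempty ↔ a u ≤ d w ∧ c w ≤ b u := fun u w => by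
    rw [hSab, hTcd, Set.Icc_inter_Icc, Set.nonempty_Icc, max_le_iff, le_min_iff, le_min_iff]
    have := hab u
    have := hcd w
    tauto
  have hp : ∀ v, a v ≤ max (a v) (c v) ∧ max (a v) (c v) ≤ b v ∧
      c v ≤ max (a v) (c v) ∧ max (a v) (c v) ≤ d v := fun v => by
    have := (hmeet v v).1 (hrefl v)
    exact ⟨le_max_left _ _, max_le (hab v) this.2, le_max_right _ _, max_le this.1 (hcd v)⟩
  obtain ⟨bd, hcat, hcuts⟩ := exists_caterpillar_isLinearCut h2 fun v => max (a v) (c v)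
  exact (bd.lbimimw_le_width E hcat).trans
    (bd.width_le_two (fun u w => (hrep u w).trans (hmeet u w)) hp hcuts)

theorem stmt_9 {V : Type} [Fintype V] (h2 : 2 ≤ Nat.card V)
    (E : V → V → Prop) (S T : V → Set ℝ)
    (hS : ∀ v, ∃ a b : ℝ, a ≤ b ∧ S v = Set.Icc a b)
    (hT : ∀ v, ∃ a b : ℝ, a ≤ b ∧ T v = Set.Icc a b)
    (hrep : ∀ v w, E v w ↔ (S v ∩ T w).Nonempty)
    (hrefl : ∀ v, (S v ∩ T v).Nonempty) :
    lbimimw E ≤ 2 :=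
  stmt_9_general h2 E S T hS hT hrep hrefl
end
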